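/- arXiv:0904.1162 — 5 statements merged into one kernel-verified Lean document; each statement's English description precedes it below -/
import Mathlib

section
/- Let n be a positive odd integer and let p > n + 1 be a prime. Then the sum in ℤ/pℤ of 1/(i_1 ⋯ i_n) over all n-tuples of integers 0 < i_1 < i_2 < ⋯ < i_n < p with i_1 ≡ 1 or 2 (mod 6) equals the sum in ℤ/pℤ of 1/(i_1 ⋯ i_n) over all n-tuples of integers 0 < i_1 < i_2 < ⋯ < i_n < p with i_1 ≡ 4 or 5 (mod 6). -/
/-!
Write `χ` for `chi6`. The difference of the two sums is `∑ χ(i₁)/(i₁⋯iₙ)`, the coefficient of `Xⁿ`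
in `H(X) = ∑_{0<m<p} χ(m) (X/m) ∏_{m<j<p} (1 + X/j)` over `𝔽_p`. Reflecting `j ↦ p - j` turns
the summand at `m = p - k` into `(-1)ᵏ χ(p - k) (X choose k) = χ(p + 2k) (X choose k)`, and since
`χ(a + 1) - χ(a) = χ(a + 2)`, Newton's forward-difference formula gives `H(x) = χ(p + x) - χ(p)` for
`0 ≤ x < p`. As `χ(a) = χ(b)` whenever `a + b ≡ 3 (mod 6)` and `p` is odd, `H(-x) = H(x)` on all of
`𝔽_p`; since `deg H < p`, `H` is an even polynomial and its odd coefficients vanish.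
-/

open Finset Polynomial fwdDiff

def chi6 {R : Type*} [Ring R] (a : ℕ) : R :=
  if a % 6 = 1 ∨ a % 6 = 2 then 1 else if a % 6 = 4 ∨ a % 6 = 5 then -1 else 0

section chi6

variable {R : Type*} [CommRing R]

lemma chi6_add_two (a : ℕ) : (chi6 (a + 2) : R) = chi6 (a + 1) - chi6 a := by
  unfold chi6; split_ifs <;> first | omega | simp

lemma chi6_add_three_mul (a k : ℕ) : (chi6 (a + 3 * k) : R) = (-1) ^ k * chi6 a := by
  induction k with
  | zero => simp
  | succ k ih =>
    have h : (chi6 (a + 3 * k + 3) : R) = -chi6 (a + 3 * k) := by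
      unfold chi6; split_ifs <;> first | omega | simp
    rw [mul_add_one, ← add_assoc, h, ih, pow_succ]; ring

lemma chi6_eq_of_add_mod_six_eq_three {a b : ℕ} (h : (a + b) % 6 = 3) :
    (chi6 a : R) = chi6 b := by
  unfold chi6; split_ifs <;> first | omega | simp

lemma chi6_mul (a : ℕ) (x : R) :
    chi6 a * x =
      (if a % 6 = 1 ∨ a % 6 = 2 then x else 0) - (if a % 6 = 4 ∨ a % 6 = 5 then x else 0) := by
  unfold chi6; split_ifs <;> first | omega | simp

lemma fwdDiff_iter_chi6 (k : ℕ) : Δ_[1] ^[k] (chi6 : ℕ → R) = fun a ↦ chi6 (a + 2 * k) := by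
  induction k with
  | zero => rfl
  | succ k ih =>
    funext a
    rw [Function.iterate_succ_apply', ih, fwdDiff, mul_add_one, ← add_assoc,
      add_right_comm, chi6_add_two]

lemma chi6_add_eq_sum_choose (y x : ℕ) :
    (chi6 (y + x) : R) = ∑ k ∈ range (x + 1), (x.choose k : R) * chi6 (y + 2 * k) := by
  simpa [fwdDiff_iter_chi6, nsmul_eq_mul] using shift_eq_sum_fwdDiff_iter 1 (chi6 : ℕ → R) x y

end chi6

theorem Polynomial.coeff_eq_zero_of_odd_of_eval_neg_eq {K : Type*} [Field K] [Fintype K]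
    (h2 : (2 : K) ≠ 0) {q : K[X]} (hdeg : q.natDegree < Fintype.card K)
    (heven : ∀ a, q.eval (-a) = q.eval a) {n : ℕ} (hn : Odd n) : q.coeff n = 0 := by
  have hcomp : q.comp (C (-1) * X) = q := by
    refine eq_of_natDegree_lt_card_of_eval_eq _ _ (f := id) Function.injective_id
      (fun a ↦ by simp [heven]) ?_
    rwa [natDegree_comp, natDegree_C_mul_X _ (by simp), mul_one, max_self]
  have h := congr_arg (coeff · n) hcomp
  simp only [comp_C_mul_X_coeff, hn.neg_one_pow, mul_neg_one] at h
  exact (mul_eq_zero.mp (show 2 * q.coeff n = 0 by linear_combination -h)).resolve_left h2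

theorem Polynomial.coeff_prod_one_add_C_mul_X {R ι : Type*} [CommSemiring R] (s : Finset ι)
    (g : ι → R) (k : ℕ) :
    (∏ i ∈ s, (1 + C (g i) * X)).coeff k = ∑ t ∈ s.powersetCard k, ∏ i ∈ t, g i := by
  classical
  simp_rw [prod_one_add, mul_comm (C _), prod_mul_distrib, prod_const, ← map_prod,
    finsetSum_coeff, coeff_X_pow_mul', coeff_C, powersetCard_eq_filter, sum_filter]
  refine sum_congr rfl fun t _ ↦ ?_
  split_ifs <;> first | rfl | omega

section tuples

variable {α : Type*} [LinearOrder α]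

def strictMonoTuples (s : Finset α) (n : ℕ) : Finset (Fin n → α) :=
  (Fintype.piFinset fun _ ↦ s).filter fun f ↦ ∀ i j, i < j → f i < f j

lemma mem_strictMonoTuples {s : Finset α} {n : ℕ} {f : Fin n → α} :
    f ∈ strictMonoTuples s n ↔ (∀ k, f k ∈ s) ∧ StrictMono f := by
  simp [strictMonoTuples, StrictMono]

theorem sum_strictMonoTuples_prod {M : Type*} [CommSemiring M] (s : Finset α) (n : ℕ)
    (g : α → M) :
    ∑ f ∈ strictMonoTuples s n, ∏ k, g (f k) = ∑ t ∈ s.powersetCard n, ∏ j ∈ t, g j := by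
  refine sum_bij' (fun f _ ↦ univ.image f)
    (fun t ht ↦ t.orderEmbOfFin (mem_powersetCard.mp ht).2) ?_ ?_ ?_ ?_ ?_
  · intro f hf
    rw [mem_strictMonoTuples] at hf
    rw [mem_powersetCard, card_image_of_injective _ hf.2.injective]
    simpa [subset_iff] using hf.1
  · intro t ht
    rw [mem_powersetCard] at ht
    exact mem_strictMonoTuples.mpr
      ⟨fun k ↦ ht.1 (orderEmbOfFin_mem _ _ k), OrderEmbedding.strictMono _⟩
  · intro f hf
    exact (orderEmbOfFin_unique _ (by simp) (mem_strictMonoTuples.mp hf).2).symm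
  · intro t ht
    exact image_orderEmbOfFin_univ _ _
  · intro f hf
    exact (prod_image fun _ _ _ _ h ↦ (mem_strictMonoTuples.mp hf).2.injective h).symm

theorem sum_strictMonoTuples_succ [LocallyFiniteOrder α] {M : Type*} [AddCommMonoid M]
    (a b : α) (n : ℕ) (φ : (Fin (n + 1) → α) → M) :
    ∑ f ∈ strictMonoTuples (Ioo a b) (n + 1), φ f =
      ∑ m ∈ Ioo a b, ∑ g ∈ strictMonoTuples (Ioo m b) n, φ (Fin.cons m g) := by
  rw [sum_sigma']
  refine sum_nbij' (fun f ↦ ⟨f 0, Fin.tail f⟩) (fun g ↦ Fin.cons g.1 g.2) ?_ ?_ ?_ ?_ ?_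
  · intro f hf
    obtain ⟨hmem, hmono⟩ := mem_strictMonoTuples.mp hf
    refine mem_sigma.mpr
      ⟨hmem 0, mem_strictMonoTuples.mpr ⟨fun k ↦ ?_, hmono.comp Fin.strictMono_succ⟩⟩
    exact mem_Ioo.mpr ⟨hmono k.succ_pos, (mem_Ioo.mp (hmem k.succ)).2⟩
  · rintro ⟨m, g⟩ hg
    obtain ⟨hm, hg⟩ := mem_sigma.mp hg
    obtain ⟨hmem, hmono⟩ := mem_strictMonoTuples.mp hg
    refine mem_strictMonoTuples.mpr ⟨Fin.cases hm fun k ↦ ?_,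
      Fin.strictMono_cons.mpr ⟨fun k ↦ (mem_Ioo.mp (hmem k)).1, hmono⟩⟩
    exact mem_Ioo.mpr ⟨(mem_Ioo.mp hm).1.trans (mem_Ioo.mp (hmem k)).1, (mem_Ioo.mp (hmem k)).2⟩
  · intro f _; simp
  · intro g _; simp
  · intro f _; simp

end tuples

lemma ZMod.prod_Ico_natCast {M : Type*} [CommMonoid M] {p m : ℕ} (hm : m ≤ p) (f : ZMod p → M) :
    ∏ j ∈ Ico m p, f j = ∏ i ∈ range (p - m), f (-(i + 1)) := by
  refine prod_nbij' (fun j ↦ p - 1 - j) (fun i ↦ p - 1 - i) ?_ ?_ ?_ ?_ ?_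
  all_goals intro j hj
  all_goals simp only [mem_Ico, mem_range] at hj ⊢
  · omega
  · omega
  · omega
  · omega
  · congr 1
    rw [Nat.cast_sub (by omega), Nat.cast_sub (by omega), ZMod.natCast_self]
    ring

noncomputable def chi6GeneratingPoly (p : ℕ) : (ZMod p)[X] :=
  ∑ m ∈ Ioo 0 p, C (chi6 m * (m : ZMod p)⁻¹) * X * ∏ j ∈ Ioo m p, (1 + C (j : ZMod p)⁻¹ * X)

variable {p : ℕ}

lemma coeff_succ_chi6GeneratingPoly (n : ℕ) :
    (chi6GeneratingPoly p).coeff (n + 1) =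
      ∑ f ∈ strictMonoTuples (Ioo 0 p) (n + 1), chi6 (f 0) * ∏ k, (f k : ZMod p)⁻¹ := by
  rw [sum_strictMonoTuples_succ, chi6GeneratingPoly, finsetSum_coeff]
  refine sum_congr rfl fun m _ ↦ ?_
  simp only [mul_assoc, coeff_C_mul, coeff_X_mul, coeff_prod_one_add_C_mul_X, Fin.prod_univ_succ,
    Fin.cons_zero, Fin.cons_succ, ← sum_strictMonoTuples_prod, mul_sum]

variable [Fact p.Prime]

lemma inv_mul_prod_Ioo_one_add_inv_mul_eq_choose {m : ℕ} (hm0 : 0 < m) (hmp : m < p) (x : ℕ) :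
    (m : ZMod p)⁻¹ * (x * ∏ j ∈ Ioo m p, (1 + (j : ZMod p)⁻¹ * x)) =
      (-1) ^ (p - m) * x.choose (p - m) := by
  set k := p - m
  have hden : (m : ZMod p) * ∏ j ∈ Ioo m p, (j : ZMod p) = (-1) ^ k * k.factorial := by
    rw [← prod_insert left_notMem_Ioo, Ioo_insert_left hmp,
      ZMod.prod_Ico_natCast hmp.le (fun y ↦ y), prod_neg, card_range,
      ← prod_range_add_one_eq_factorial]
    push_cast; rfl
  have hnum : (x : ZMod p) * ∏ j ∈ Ioo m p, ((j : ZMod p) + x) = x.descFactorial k := by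
    rw [← Finset.Ico_add_one_left_eq_Ioo, ZMod.prod_Ico_natCast (m := m + 1) hmp (fun y ↦ y + x),
      ← descPochhammer_eval_eq_descFactorial, descPochhammer_eval_eq_prod_range,
      show k = (p - (m + 1)) + 1 by omega, prod_range_succ']
    simp only [Nat.cast_add, Nat.cast_one, Nat.cast_zero, sub_zero]
    ring_nf
  have hsplit : ∏ j ∈ Ioo m p, (1 + (j : ZMod p)⁻¹ * x) =
      (∏ j ∈ Ioo m p, ((j : ZMod p) + x)) * (∏ j ∈ Ioo m p, (j : ZMod p))⁻¹ := by
    rw [← prod_inv_distrib, ← prod_mul_distrib]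
    refine prod_congr rfl fun j hj ↦ ?_
    obtain ⟨hmj, hjp⟩ := mem_Ioo.mp hj
    have : (j : ZMod p) ≠ 0 := by
      rw [Ne, ZMod.natCast_eq_zero_iff]
      exact Nat.not_dvd_of_pos_of_lt (hm0.trans hmj) hjp
    field_simp
  have hfac : (k.factorial : ZMod p) ≠ 0 := by
    rw [Ne, ZMod.natCast_eq_zero_iff, (Fact.out : p.Prime).dvd_factorial]
    omega
  calc (m : ZMod p)⁻¹ * (x * ∏ j ∈ Ioo m p, (1 + (j : ZMod p)⁻¹ * x))
      = (x * ∏ j ∈ Ioo m p, ((j : ZMod p) + x)) * (m * ∏ j ∈ Ioo m p, (j : ZMod p))⁻¹ := by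
        rw [hsplit, mul_inv]; ring
    _ = (-1) ^ k * x.choose k := by
        rw [hnum, hden, Nat.descFactorial_eq_factorial_mul_choose, Nat.cast_mul, mul_inv,
          ← inv_pow, inv_neg_one]
        field_simp

lemma natDegree_chi6GeneratingPoly_lt : (chi6GeneratingPoly p).natDegree < p := by
  have hp := (Fact.out : p.Prime).two_le
  refine (natDegree_sum_le_of_forall_le _ _ (n := p - 1) fun m hm ↦ ?_).trans_lt (by omega)
  have hfactor : ∀ j ∈ Ioo m p, (1 + C (j : ZMod p)⁻¹ * X).natDegree ≤ 1 := fun _ _ ↦ by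
    compute_degree
  calc _ ≤ (C (chi6 m * (m : ZMod p)⁻¹) * X).natDegree +
        (∏ j ∈ Ioo m p, (1 + C (j : ZMod p)⁻¹ * X)).natDegree := natDegree_mul_le
    _ ≤ 1 + #(Ioo m p) * 1 := by
      gcongr
      · compute_degree
      · exact (natDegree_prod_le _ _).trans (sum_le_card_nsmul _ _ _ hfactor)
    _ ≤ p - 1 := by simp only [Nat.card_Ioo, mul_one]; have := (mem_Ioo.mp hm); omega

lemma eval_natCast_chi6GeneratingPoly {x : ℕ} (hx : x < p) :
    (chi6GeneratingPoly p).eval (x : ZMod p) = (chi6 (p + x) - chi6 p : ZMod p) := by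
  have hterm : ∀ m ∈ Ioo 0 p, (C (chi6 m * (m : ZMod p)⁻¹) * X *
      ∏ j ∈ Ioo m p, (1 + C (j : ZMod p)⁻¹ * X)).eval (x : ZMod p) =
      (x.choose (p - m) : ZMod p) * chi6 (p + 2 * (p - m)) := fun m hm ↦ by
    obtain ⟨hm0, hmp⟩ := mem_Ioo.mp hm
    simp only [eval_mul, eval_C, eval_X, eval_prod, eval_add, eval_one]
    rw [mul_assoc, mul_assoc, inv_mul_prod_Ioo_one_add_inv_mul_eq_choose hm0 hmp, ← mul_assoc,
      mul_comm (chi6 m), ← chi6_add_three_mul, show m + 3 * (p - m) = p + 2 * (p - m) by omega,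
      mul_comm]
  have hreflect : ∑ m ∈ Ioo 0 p, (x.choose (p - m) : ZMod p) * chi6 (p + 2 * (p - m)) =
      ∑ k ∈ Ioo 0 p, (x.choose k : ZMod p) * chi6 (p + 2 * k) :=
    sum_nbij' (p - ·) (p - ·) (fun m hm ↦ by simp only [mem_Ioo] at hm ⊢; omega)
      (fun m hm ↦ by simp only [mem_Ioo] at hm ⊢; omega)
      (fun m hm ↦ by simp only [mem_Ioo] at hm; omega)
      (fun m hm ↦ by simp only [mem_Ioo] at hm; omega) (fun _ _ ↦ rfl)
  have hchoose : ∀ k ∈ range p, k ∉ range (x + 1) → (x.choose k : ZMod p) * chi6 (p + 2 * k) = 0 :=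
    fun k _ hk ↦ by
      rw [Nat.choose_eq_zero_of_lt (by simpa using hk), Nat.cast_zero, zero_mul]
  rw [chi6GeneratingPoly, eval_finsetSum, sum_congr rfl hterm, hreflect, chi6_add_eq_sum_choose,
    sum_subset (range_subset_range.mpr hx) hchoose, range_eq_Ico, sum_eq_sum_Ico_succ_bot (by omega),
    Ico_add_one_left_eq_Ioo]
  simp

lemma eval_neg_chi6GeneratingPoly (hp : Odd p) (a : ZMod p) :
    (chi6GeneratingPoly p).eval (-a) = (chi6GeneratingPoly p).eval a := by
  obtain ⟨x, hx, rfl⟩ : ∃ x < p, (x : ZMod p) = a := ⟨a.val, a.val_lt, a.natCast_zmod_val⟩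
  rcases eq_or_ne x 0 with rfl | hx0
  · simp
  have hneg : -(x : ZMod p) = ((p - x : ℕ) : ZMod p) := by
    rw [Nat.cast_sub hx.le, ZMod.natCast_self, zero_sub]
  obtain ⟨r, hr⟩ := hp
  rw [hneg, eval_natCast_chi6GeneratingPoly (by omega), eval_natCast_chi6GeneratingPoly hx,
    chi6_eq_of_add_mod_six_eq_three (b := p + x) (by omega)]

/-- Let `n` be a positive odd integer and `p > n + 1` a prime. Then the sum in `ℤ/pℤ` of
`1/(i₁⋯iₙ)` over strictly increasing `n`-tuples `0 < i₁ < ⋯ < iₙ < p` with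
`i₁ ≡ 1, 2 (mod 6)` equals the corresponding sum with `i₁ ≡ 4, 5 (mod 6)`. -/
theorem curious_congruence_odd_six (n p : ℕ) (hn : 0 < n) (hodd : Odd n)
    (hp : p.Prime) (hnp : n + 1 < p) :
    ∑ f ∈ (Fintype.piFinset fun _ : Fin n => Finset.Ioo 0 p).filter
        (fun f => (∀ i j : Fin n, i < j → f i < f j) ∧
          (f ⟨0, hn⟩ % 6 = 1 ∨ f ⟨0, hn⟩ % 6 = 2)),
      ∏ k : Fin n, ((f k : ZMod p))⁻¹ =
    ∑ f ∈ (Fintype.piFinset fun _ : Fin n => Finset.Ioo 0 p).filter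
        (fun f => (∀ i j : Fin n, i < j → f i < f j) ∧
          (f ⟨0, hn⟩ % 6 = 4 ∨ f ⟨0, hn⟩ % 6 = 5)),
      ∏ k : Fin n, ((f k : ZMod p))⁻¹ := by
  have := Fact.mk hp
  obtain ⟨n, rfl⟩ : ∃ m, n = m + 1 := ⟨n - 1, by omega⟩
  have hp_odd : Odd p := hp.odd_of_ne_two (by omega)
  rw [← sub_eq_zero, ← filter_filter, ← filter_filter, ← strictMonoTuples, sum_filter, sum_filter,
    ← sum_sub_distrib]
  simp only [← chi6_mul]
  simp only [Fin.zero_eta]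
  rw [← coeff_succ_chi6GeneratingPoly]
  refine coeff_eq_zero_of_odd_of_eval_neg_eq ?_ ?_ (eval_neg_chi6GeneratingPoly hp_odd) hodd
  · exact Ring.two_ne_zero (by rw [ZMod.ringChar_zmod_n]; omega)
  · rw [ZMod.card]; exact natDegree_chi6GeneratingPoly_lt
end

section
/- Let n be a positive integer and let p > n + 1 be a prime. Let F_n(x) be the polynomial over ℤ/pℤ defined by F_n(x) = Σ x^{i_1}/(i_1 ⋯ i_n), where the sum ranges over all n-tuples of integers 0 < i_1 < i_2 < ⋯ < i_n < p. Then F_n(1 - x) = (-1)^{n-1} · F_n(x) as polynomials over ℤ/pℤ, i.e., the composition of F_n with the polynomial 1 - x equals (-1)^{n-1} times F_n. -/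
open Polynomial Finset

/-- truncated elementary symmetric sum of inverses over `(m, p)`. -/
noncomputable def zsA (p n m : ℕ) : ZMod p :=
  ∑ s ∈ (Finset.Ioo m p).powersetCard n, ∏ i ∈ s, ((i : ZMod p))⁻¹

noncomputable def zsB (p n : ℕ) : Polynomial (ZMod p) :=
  ∑ m ∈ Finset.Ioo 0 p, C ((m : ZMod p)⁻¹ * zsA p n m) * X ^ m

lemma zsA_zero (p m : ℕ) : zsA p 0 m = 1 := by
  simp [zsA]

lemma zsA_of_ge (p n m : ℕ) (h : p ≤ m + 1) (hn : 0 < n) : zsA p n m = 0 := by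
  rw [zsA, Finset.powersetCard_eq_empty.2 (by rw [Nat.card_Ioo]; omega), Finset.sum_empty]

lemma zsK1 (p n m : ℕ) (hm : m + 1 ≤ p) :
    zsA p (n + 1) m = zsA p (n + 1) (m + 1) + ((m + 1 : ℕ) : ZMod p)⁻¹ * zsA p n (m + 1) := by
  rcases eq_or_lt_of_le hm with h | h
  · rw [zsA_of_ge p (n+1) m (by omega) (Nat.succ_pos n),
      zsA_of_ge p (n+1) (m+1) (by omega) (Nat.succ_pos n), h, ZMod.natCast_self,
      ZMod.inv_zero, zero_mul, add_zero]
  · have hnotmem : (m + 1) ∉ Finset.Ioo (m + 1) p := by simp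
    have hins : Finset.Ioo m p = insert (m + 1) (Finset.Ioo (m + 1) p) := by
      ext x; simp only [Finset.mem_Ioo, Finset.mem_insert]; omega
    have hdisj : Disjoint ((Finset.Ioo (m+1) p).powersetCard (n+1))
        (((Finset.Ioo (m+1) p).powersetCard n).image (insert (m+1))) := by
      rw [Finset.disjoint_left]
      intro s hs hs'
      rw [Finset.mem_powersetCard] at hs
      obtain ⟨t, ht, rfl⟩ := Finset.mem_image.1 hs'
      exact hnotmem (hs.1 (Finset.mem_insert_self _ _))
    have hinj : Set.InjOn (insert (m+1)) (((Finset.Ioo (m+1) p).powersetCard n : Finset (Finset ℕ)) : Set (Finset ℕ)) := by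
      intro s hs t ht hst
      have hs' : (m+1) ∉ s := fun hc =>
        hnotmem ((Finset.mem_powersetCard.1 hs).1 hc)
      have ht' : (m+1) ∉ t := fun hc =>
        hnotmem ((Finset.mem_powersetCard.1 ht).1 hc)
      rw [← Finset.erase_insert hs', ← Finset.erase_insert ht', hst]
    rw [zsA, hins, Finset.powersetCard_succ_insert hnotmem, Finset.sum_union hdisj,
      Finset.sum_image hinj]
    congr 1
    rw [zsA, Finset.mul_sum]
    refine Finset.sum_congr rfl fun t ht => ?_
    rw [Finset.prod_insert (fun hc => hnotmem ((Finset.mem_powersetCard.1 ht).1 hc))]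


lemma zsK2 (p n : ℕ) : zsA p (n + 1) 0 = ∑ m ∈ Finset.Ioo 0 p, ((m : ZMod p))⁻¹ * zsA p n m := by
  rcases Nat.eq_zero_or_pos p with rfl | hp0
  · rw [zsA_of_ge 0 (n+1) 0 (by omega) (Nat.succ_pos n)]; simp
  set g
 : ℕ → ZMod p := fun j => ((j : ℕ) : ZMod p)⁻¹ * zsA p n j with hg
  have tele : ∑ m ∈ Finset.range p, (zsA p (n+1) m - zsA p (n+1) (m+1))
      = zsA p (n+1) 0 - zsA p (n+1) p := Finset.sum_range_sub' _ p
  rw [zsA_of_ge p (n+1) p (by omega) (Nat.succ_pos n), sub_zero] at tele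
  have hcong : ∀ m ∈ Finset.range p, zsA p (n+1) m - zsA p (n+1) (m+1) = g (m+1) := by
    intro m hm
    rw [hg, zsK1 p n m (Finset.mem_range.1 hm)]
    ring
  rw [← tele, Finset.sum_congr rfl hcong]
  have h0 : g 0 = 0 := by simp [hg, ZMod.inv_zero]
  have hp' : g p = 0 := by simp [hg, ZMod.natCast_self, ZMod.inv_zero]
  have e1 : ∑ m ∈ Finset.range (p+1), g m = (∑ m ∈ Finset.range p, g (m+1)) + g 0 :=
    Finset.sum_range_succ' g p
  have e2 : ∑ m ∈ Finset.range (p+1), g m = (∑ m ∈ Finset.range p, g m) + g p :=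
    Finset.sum_range_succ g p
  have e3 : ∑ m ∈ Finset.range p, g m = ∑ m ∈ Finset.Ioo 0 p, g m := by
    have hins : Finset.range p = insert 0 (Finset.Ioo 0 p) := by
      ext x; simp only [Finset.mem_range, Finset.mem_Ioo, Finset.mem_insert]; omega
    rw [hins, Finset.sum_insert (by simp), h0, zero_add]
  rw [h0, add_zero] at e1
  rw [hp', add_zero] at e2
  rw [← e1, e2, e3]


lemma esymm_cons_zero {R : Type*} [CommRing R] (t : Multiset R) (k : ℕ) :
    (0 ::ₘ t).esymm (k + 1) = t.esymm (k + 1) := by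
  rw [Multiset.esymm, Multiset.powersetCard_cons, Multiset.map_add, Multiset.sum_add,
    Multiset.esymm, Multiset.map_map]
  have : ∀ u ∈ Multiset.powersetCard k t, (Multiset.prod ∘ Multiset.cons 0) u = 0 := by
    intro u _
    simp
  rw [Multiset.map_congr rfl this, Multiset.map_const', Multiset.sum_replicate, smul_zero,
    add_zero]

lemma zsV (p n : ℕ) (hp : p.Prime) (h1 : 1 ≤ n) (h2 : n ≤ p - 2) : zsA p n 0 = 0 := by
  haveI := Fact.mk hp
  have hp2 : 2 ≤ p := hp.two_le
  have hp3 : 3 ≤ p := by omega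
  set f : ℕ → ZMod p := fun i => ((i : ZMod p))⁻¹ with hf
  have hinj : Set.InjOn f ((Finset.Ioo 0 p : Finset ℕ) : Set ℕ) := by
    intro i hi j hj hij
    simp only [Finset.coe_Ioo, Set.mem_Ioo] at hi hj
    have : (i : ZMod p) = (j : ZMod p) := inv_injective hij
    have := congrArg ZMod.val this
    rwa [ZMod.val_cast_of_lt hi.2, ZMod.val_cast_of_lt hj.2] at this
  have hcast_ne : ∀ i ∈ Finset.Ioo 0 p, (i : ZMod p) ≠ 0 := by
    intro i hi
    rw [Finset.mem_Ioo] at hi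
    rw [Ne, ZMod.natCast_eq_zero_iff]
    exact fun hdvd => absurd (Nat.le_of_dvd hi.1 hdvd) (by omega)

  have himage : (Finset.Ioo 0 p).image f = Finset.univ.erase (0 : ZMod p) := by
    apply Finset.eq_of_subset_of_card_le
    · intro x hx
      obtain ⟨i, hi, rfl⟩ := Finset.mem_image.1 hx
      exact Finset.mem_erase.2 ⟨inv_ne_zero (hcast_ne i hi), Finset.mem_univ _⟩
    · rw [Finset.card_erase_of_mem (Finset.mem_univ _), Finset.card_univ, ZMod.card,
        Finset.card_image_of_injOn hinj, Nat.card_Ioo]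
      omega

  have hmul : ((Finset.Ioo 0 p).val.map f) = (Finset.univ.erase (0 : ZMod p)).val := by
    rw [← Finset.image_val_of_injOn hinj, himage]
  -- zsA p n 0 as esymm
  have hA : zsA p n 0 = ((Finset.Ioo 0 p).val.map f).esymm n := by
    rw [zsA, Finset.esymm_map_val]
  -- the multiset of all elements
  have hcons : (Finset.univ : Finset (ZMod p)).val
      = 0 ::ₘ (Finset.univ.erase (0 : ZMod p)).val := by
    rw [Finset.erase_val]
    exact (Multiset.cons_erase (Finset.mem_univ (0 : ZMod p))).symm
  obtain ⟨k, rfl⟩ : ∃ k, n = k + 1 := ⟨n - 1, by omega⟩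
  have hesymm_univ : ((Finset.univ : Finset (ZMod p)).val).esymm (k+1)
      = ((Finset.Ioo 0 p).val.map f).esymm (k+1) := by
    rw [hcons, esymm_cons_zero, hmul]
  -- product over all elements
  have hcard : Multiset.card (Finset.univ : Finset (ZMod p)).val = p := by
    rw [← Finset.card_def, Finset.card_univ, ZMod.card]
  have hprod : ((Finset.univ : Finset (ZMod p)).val.map fun a => X - C a).prod
      = X ^ p - X := by
    have hroots : (X ^ p - X : (ZMod p)[X]).roots = (Finset.univ : Finset (ZMod p)).val := by
      have := FiniteField.roots_X_pow_card_sub_X (ZMod p)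
      rwa [ZMod.card] at this
    have hmonic : (X ^ p - X : (ZMod p)[X]).Monic := by
      apply Polynomial.monic_X_pow_sub
      rw [Polynomial.degree_X]
      exact_mod_cast by omega
    have hdeg : (X ^ p - X : (ZMod p)[X]).natDegree = p :=
      FiniteField.X_pow_card_sub_X_natDegree_eq (ZMod p) (by omega)
    have := prod_multiset_X_sub_C_of_monic_of_roots_card_eq hmonic
      (by rw [hroots, hcard, hdeg])
    rwa [hroots] at this
  have hcoeff := Multiset.prod_X_sub_C_coeff (Finset.univ : Finset (ZMod p)).val
    (k := p - (k+1)) (by rw [hcard]; omega)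
  rw [hprod, hcard] at hcoeff
  have hk : p - (p - (k+1)) = k + 1 := by omega
  rw [hk] at hcoeff
  have hzero : (X ^ p - X : (ZMod p)[X]).coeff (p - (k+1)) = 0 := by
    rw [Polynomial.coeff_sub, Polynomial.coeff_X_pow, Polynomial.coeff_X]
    have h1' : p - (k+1) ≠ p := by omega
    have h2' : p - (k+1) ≠ 1 := by omega
    simp only [h1', h2', if_false, ite_false, ite_eq_right_iff]
    simp [h1', h2']
    omega

  rw [hzero] at hcoeff
  have := hcoeff.symm
  rw [hesymm_univ] at this
  have hne : ((-1 : ZMod p)) ^ (k+1) ≠ 0 := by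
    apply pow_ne_zero
    simp only [ne_eq, neg_eq_zero]
    exact one_ne_zero
  rw [hA]
  exact (mul_eq_zero.1 this).resolve_left hne


lemma zsB_natDegree (p n : ℕ) (hp : p.Prime) : (zsB p n).natDegree < p := by
  haveI := Fact.mk hp
  have hp2 := hp.two_le
  have : (zsB p n).natDegree ≤ p - 1 := by
    apply Polynomial.natDegree_sum_le_of_forall_le
    intro m hm
    rw [Finset.mem_Ioo] at hm
    refine (Polynomial.natDegree_C_mul_le _ _).trans ?_
    rw [Polynomial.natDegree_X_pow]
    omega
  omega

lemma zsB_coeff_zero (p n : ℕ) : (zsB p n).coeff 0 = 0 := by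
  rw [zsB, Polynomial.finset_sum_coeff]
  apply Finset.sum_eq_zero
  intro m hm
  rw [Finset.mem_Ioo] at hm
  rw [Polynomial.coeff_C_mul, Polynomial.coeff_X_pow, if_neg (by omega), mul_zero]

lemma zsB_eval_one (p n : ℕ) : (zsB p n).eval 1 = zsA p (n + 1) 0 := by
  rw [zsB, Polynomial.eval_finset_sum, zsK2]
  refine Finset.sum_congr rfl fun m hm => ?_
  simp

lemma zsD (p n : ℕ) (hp : p.Prime) :
    X * (X - 1) * derivative (zsB p n)
      = ∑ m ∈ Finset.Ioo 0 p, C (zsA p n m) * (X ^ (m + 1) - X ^ m) := by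
  haveI := Fact.mk hp
  rw [zsB, map_sum, Finset.mul_sum]
  refine Finset.sum_congr rfl fun m hm => ?_
  rw [Finset.mem_Ioo] at hm
  obtain ⟨m', rfl⟩ : ∃ m', m = m' + 1 := ⟨m - 1, by omega⟩
  rw [Polynomial.derivative_C_mul_X_pow]
  have hne : ((m' + 1 : ℕ) : ZMod p) ≠ 0 := by
    rw [Ne, ZMod.natCast_eq_zero_iff]
    exact fun hdvd => absurd (Nat.le_of_dvd (by omega) hdvd) (by omega)
  have hco : ((m' + 1 : ℕ) : ZMod p)⁻¹ * zsA p n (m' + 1) * ((m' + 1 : ℕ) : ZMod p)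
      = zsA p n (m' + 1) := by
    rw [mul_comm (((m' + 1 : ℕ) : ZMod p))⁻¹ _, mul_assoc, inv_mul_cancel₀ hne, mul_one]
  rw [hco, Nat.add_sub_cancel]
  ring

lemma zsR0 (p : ℕ) (hp : p.Prime) :
    X * (X - 1) * derivative (zsB p 0) = X ^ p - X := by
  have hp2 := hp.two_le
  rw [zsD p 0 hp]
  have h1 : ∀ m ∈ Finset.Ioo 0 p, C (zsA p 0 m) * (X ^ (m+1) - X ^ m : (ZMod p)[X])
      = X ^ (m+1) - X ^ m := by
    intro m hm
    rw [zsA_zero, map_one, one_mul]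
  rw [Finset.sum_congr rfl h1]
  have hins : Finset.range p = insert 0 (Finset.Ioo 0 p) := by
    ext x; simp only [Finset.mem_range, Finset.mem_Ioo, Finset.mem_insert]; omega
  have htele : ∑ m ∈ Finset.range p, (X ^ (m+1) - X ^ m : (ZMod p)[X])
      = X ^ p - X ^ 0 := Finset.sum_range_sub (fun i => (X : (ZMod p)[X]) ^ i) p
  rw [hins, Finset.sum_insert (by simp)] at htele
  have := htele
  rw [pow_zero, pow_one] at this
  -- this : (X - 1) + ∑_{Ioo} = X^p - 1
  have h2 : ∑ m ∈ Finset.Ioo 0 p, (X ^ (m+1) - X ^ m : (ZMod p)[X])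
      = X ^ p - 1 - (X - 1) := by
    rw [← this]; ring
  rw [h2]; ring

lemma zsRS (p n : ℕ) (hp : p.Prime) (hn : n + 1 ≤ p - 2) :
    X * (X - 1) * derivative (zsB p (n + 1)) = zsB p n := by
  haveI := Fact.mk hp
  have hp2 := hp.two_le
  rw [zsD p (n+1) hp]
  set g : ℕ → (ZMod p)[X] := fun j => C (zsA p (n+1) j) * X ^ j with hg
  set h : ℕ → (ZMod p)[X] := fun j => C (((j : ℕ) : ZMod p)⁻¹ * zsA p n j) * X ^ j with hh
  have hA0 : zsA p (n+1) 0 = 0 := zsV p (n+1) hp (by omega) (by omega)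
  have hins : Finset.range p = insert 0 (Finset.Ioo 0 p) := by
    ext x; simp only [Finset.mem_range, Finset.mem_Ioo, Finset.mem_insert]; omega
  have hterm : ∀ m ∈ Finset.range p, C (zsA p (n+1) m) * (X ^ (m+1) - X ^ m : (ZMod p)[X])
      = (g (m+1) - g m) + h (m+1) := by
    intro m hm
    rw [Finset.mem_range] at hm
    have hk1 := zsK1 p n m (by omega)
    rw [hg, hh]
    simp only []
    rw [hk1, map_add, map_mul]
    ring
  -- extend the sum to range p
  have hext : ∑ m ∈ Finset.Ioo 0 p, C (zsA p (n+1) m) * (X ^ (m+1) - X ^ m : (ZMod p)[X])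
      = ∑ m ∈ Finset.range p, C (zsA p (n+1) m) * (X ^ (m+1) - X ^ m : (ZMod p)[X]) := by
    rw [hins, Finset.sum_insert (by simp), hA0, map_zero, zero_mul, zero_add]
  rw [hext, Finset.sum_congr rfl hterm, Finset.sum_add_distrib,
    Finset.sum_range_sub g p]
  have hgp : g p = 0 := by
    rw [hg]; simp only []
    rw [zsA_of_ge p (n+1) p (by omega) (Nat.succ_pos n), map_zero, zero_mul]
  have hg0 : g 0 = C (zsA p (n+1) 0) * 1 := by rw [hg]; simp
  have hsum_h : ∑ m ∈ Finset.range p, h (m+1) = ∑ m ∈ Finset.Ioo 0 p, h m := by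
    have h0 : h 0 = 0 := by
      rw [hh]; simp [ZMod.inv_zero]
    have hp' : h p = 0 := by
      rw [hh]; simp [ZMod.natCast_self, ZMod.inv_zero]
    have e1 : ∑ m ∈ Finset.range (p+1), h m = (∑ m ∈ Finset.range p, h (m+1)) + h 0 :=
      Finset.sum_range_succ' h p
    have e2 : ∑ m ∈ Finset.range (p+1), h m = (∑ m ∈ Finset.range p, h m) + h p :=
      Finset.sum_range_succ h p
    have e3 : ∑ m ∈ Finset.range p, h m = ∑ m ∈ Finset.Ioo 0 p, h m := by
      rw [hins, Finset.sum_insert (by simp), h0, zero_add]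
    rw [h0, add_zero] at e1
    rw [hp', add_zero] at e2
    rw [← e1, e2, e3]
  have hBn : ∑ m ∈ Finset.Ioo 0 p, h m = zsB p n := by
    simp only [zsB, hh]
  rw [hgp, hg0, hA0, map_zero, zero_mul, sub_zero, zero_add, hsum_h, hBn]

lemma eq_zero_of_derivative (p : ℕ) (hp : p.Prime) (g : Polynomial (ZMod p))
    (hd : derivative g = 0) (h0 : g.coeff 0 = 0) (hdeg : g.natDegree < p) : g = 0 := by
  haveI := Fact.mk hp
  ext k
  rw [Polynomial.coeff_zero]
  rcases k with _ | k
  · exact h0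
  · rcases lt_or_ge (k+1) p with hk | hk
    · have hder := congrArg (fun q : (ZMod p)[X] => q.coeff k) hd
      simp only [Polynomial.coeff_derivative, Polynomial.coeff_zero] at hder
      have hne : ((k + 1 : ℕ) : ZMod p) ≠ 0 := by
        rw [Ne, ZMod.natCast_eq_zero_iff]
        exact fun hdvd => absurd (Nat.le_of_dvd (by omega) hdvd) (by omega)
      have : g.coeff (k+1) * ((k + 1 : ℕ) : ZMod p) = 0 := by
        rw [← hder]; push_cast; ring
      exact (mul_eq_zero.1 this).resolve_right hne
    · exact Polynomial.coeff_eq_zero_of_natDegree_lt (lt_of_lt_of_le hdeg hk)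

lemma machine (p n : ℕ) (hp : p.Prime) (f r : Polynomial (ZMod p))
    (h1 : X * (X - 1) * derivative f = r)
    (h2 : r.comp (1 - X) = (-1) ^ (n + 1) * r)
    (h3 : f.natDegree < p) (h4 : f.coeff 0 = 0) (h5 : f.eval 1 = 0) :
    f.comp (1 - X) = (-1) ^ n * f := by
  haveI := Fact.mk hp
  have hXne : (X : (ZMod p)[X]) ≠ 0 := Polynomial.X_ne_zero
  have hX1ne : (X - 1 : (ZMod p)[X]) ≠ 0 := by
    have := Polynomial.X_sub_C_ne_zero (1 : ZMod p)
    rwa [Polynomial.C_1] at this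
  have hXX : (X * (X - 1) : (ZMod p)[X]) ≠ 0 := mul_ne_zero hXne hX1ne
  have hcompXX : ((X * (X - 1) : (ZMod p)[X])).comp (1 - X) = X * (X - 1) := by
    simp only [Polynomial.mul_comp, Polynomial.sub_comp, Polynomial.X_comp,
      Polynomial.one_comp]
    ring
  have hD : (derivative f).comp (1 - X) = (-1) ^ (n+1) * derivative f := by
    apply mul_left_cancel₀ hXX
    calc X * (X - 1) * ((derivative f).comp (1 - X))
        = (X * (X - 1) * derivative f).comp (1 - X) := by
          rw [Polynomial.mul_comp, hcompXX]
      _ = r.comp (1 - X) := by rw [h1]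
      _ = (-1) ^ (n+1) * r := h2
      _ = (-1) ^ (n+1) * (X * (X - 1) * derivative f) := by rw [h1]
      _ = X * (X - 1) * ((-1) ^ (n+1) * derivative f) := by ring
  have hCpow : ((-1 : (ZMod p)[X])) ^ n = C ((-1 : ZMod p) ^ n) := by
    rw [map_pow, map_neg, map_one]
  set g : (ZMod p)[X] := f.comp (1 - X) - (-1) ^ n * f with hg
  have hder : derivative g = 0 := by
    rw [hg, derivative_sub, Polynomial.derivative_comp, hCpow, Polynomial.derivative_C_mul,
      hD]
    have hd1 : derivative (1 - X : (ZMod p)[X]) = -1 := by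
      rw [derivative_sub, Polynomial.derivative_one, Polynomial.derivative_X]; ring
    rw [hd1, ← hCpow, pow_succ]
    ring
  have hco : g.coeff 0 = 0 := by
    rw [hg, Polynomial.coeff_sub, Polynomial.coeff_zero_eq_eval_zero,
      Polynomial.coeff_zero_eq_eval_zero, Polynomial.eval_comp]
    simp only [Polynomial.eval_sub, Polynomial.eval_one, Polynomial.eval_X, sub_zero, h5,
      Polynomial.eval_mul]
    rw [← Polynomial.coeff_zero_eq_eval_zero f, h4]
    ring
  have hdg : g.natDegree < p := by
    have hcomp : (f.comp (1 - X)).natDegree < p := by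
      rw [Polynomial.natDegree_comp]
      have h1X : (1 - X : (ZMod p)[X]).natDegree = 1 := by
        have : (1 - X : (ZMod p)[X]) = -(X - C 1) := by rw [Polynomial.C_1]; ring
        rw [this, Polynomial.natDegree_neg, Polynomial.natDegree_X_sub_C]
      rw [h1X, mul_one]
      exact h3
    have hmul : ((-1 : (ZMod p)[X]) ^ n * f).natDegree < p := by
      rw [hCpow]
      exact lt_of_le_of_lt (Polynomial.natDegree_C_mul_le _ _) h3
    exact lt_of_le_of_lt (Polynomial.natDegree_sub_le _ _) (max_lt hcomp hmul)
  have := eq_zero_of_derivative p hp g hder hco hdg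
  rw [hg, sub_eq_zero] at this
  exact this

lemma zsSym (p : ℕ) (hp : p.Prime) : ∀ n : ℕ, n + 3 ≤ p →
    (zsB p n).comp (1 - X) = (-1) ^ n * zsB p n := by
  intro n
  induction n with
  | zero =>
    intro h
    refine machine p 0 hp _ (X ^ p - X) (zsR0 p hp) ?_ (zsB_natDegree p 0 hp)
      (zsB_coeff_zero p 0) ?_
    · haveI := Fact.mk hp
      rw [Polynomial.sub_comp, Polynomial.pow_comp, Polynomial.X_comp]
      rw [sub_pow_char (1 : (ZMod p)[X]) X, one_pow]
      ring
    · rw [zsB_eval_one]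
      exact zsV p 1 hp le_rfl (by omega)
  | succ n ih =>
    intro h
    refine machine p (n+1) hp _ (zsB p n) (zsRS p n hp (by omega)) ?_
      (zsB_natDegree p (n+1) hp) (zsB_coeff_zero p (n+1)) ?_
    · rw [ih (by omega)]
      congr 1
      rw [show n + 1 + 1 = n + 2 by rfl, pow_add, neg_one_sq, mul_one]
    · rw [zsB_eval_one]
      exact zsV p (n+2) hp (by omega) (by omega)

/-- The polynomial `F_n(x) = ∑ x^{i₁}/(i₁⋯iₙ)` over `ℤ/pℤ`, the sum ranging over all
strictly increasing `n`-tuples of integers `0 < i₁ < ⋯ < iₙ < p`. -/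
noncomputable def zhaoSunF (n p : ℕ) (hn : 0 < n) : Polynomial (ZMod p) :=
  ∑ f ∈ (Fintype.piFinset fun _ : Fin n => Finset.Ioo 0 p).filter
      (fun f => ∀ i j : Fin n, i < j → f i < f j),
    Polynomial.C (∏ k : Fin n, ((f k : ZMod p))⁻¹) * Polynomial.X ^ (f ⟨0, hn⟩)

lemma zhaoSunF_eq_zsB (N p : ℕ) : zhaoSunF (N + 1) p (Nat.succ_pos N) = zsB p N := by
  classical
  rw [zhaoSunF, zsB]
  have hrhs : ∀ m ∈ Finset.Ioo 0 p,
      (C ((m : ZMod p)⁻¹ * zsA p N m) * X ^ m : (ZMod p)[X])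
      = ∑ t ∈ (Finset.Ioo m p).powersetCard N,
          C ((m : ZMod p)⁻¹ * ∏ i ∈ t, ((i : ZMod p))⁻¹) * X ^ m := by
    intro m _
    rw [zsA, Finset.mul_sum, map_sum, Finset.sum_mul]
  rw [Finset.sum_congr rfl hrhs, Finset.sum_sigma']
  refine Finset.sum_bij
    (fun f _ => (⟨f 0, Finset.image (fun k : Fin N => f k.succ) Finset.univ⟩ :
      (_ : ℕ) × Finset ℕ)) ?_ ?_ ?_ ?_
  · -- maps into the sigma set
    intro f hf
    rw [Finset.mem_filter, Fintype.mem_piFinset] at hf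
    obtain ⟨hmem, hmono⟩ := hf
    rw [Finset.mem_sigma]
    constructor
    · exact hmem 0
    · rw [Finset.mem_powersetCard]
      constructor
      · intro x hx
        obtain ⟨k, _, rfl⟩ := Finset.mem_image.1 hx
        have h1 := hmono 0 k.succ (Fin.succ_pos k)
        have h2 := (Finset.mem_Ioo.1 (hmem k.succ)).2
        exact Finset.mem_Ioo.2 ⟨h1, h2⟩
      · rw [Finset.card_image_of_injective _ ?inj, Finset.card_univ, Fintype.card_fin]
        case inj =>
          intro a b hab
          by_contra hne
          rcases lt_or_gt_of_ne (fun hc : a = b => hne hc) with h | h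
          · exact absurd hab (ne_of_lt (hmono _ _ (Fin.succ_lt_succ_iff.2 h)))
          · exact absurd hab.symm (ne_of_lt (hmono _ _ (Fin.succ_lt_succ_iff.2 h)))
  · -- injective
    intro f hf g hg hfg
    rw [Finset.mem_filter, Fintype.mem_piFinset] at hf hg
    obtain ⟨hfmem, hfmono⟩ := hf
    obtain ⟨hgmem, hgmono⟩ := hg
    obtain ⟨h0, himg0⟩ := Sigma.mk.inj_iff.1 hfg
    have himg : Finset.image (fun k : Fin N => f k.succ) Finset.univ
        = Finset.image (fun k : Fin N => g k.succ) Finset.univ := eq_of_heq himg0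
    set t := Finset.image (fun k : Fin N => f k.succ) Finset.univ with ht
    have hcardf : Finset.card t = N := by
      rw [ht, Finset.card_image_of_injective _ ?injf, Finset.card_univ, Fintype.card_fin]
      case injf =>
        intro a b hab
        by_contra hne
        rcases lt_or_gt_of_ne (fun hc : a = b => hne hc) with h | h
        · exact absurd hab (ne_of_lt (hfmono _ _ (Fin.succ_lt_succ_iff.2 h)))
        · exact absurd hab.symm (ne_of_lt (hfmono _ _ (Fin.succ_lt_succ_iff.2 h)))
    have hful : ∀ k : Fin N, f k.succ ∈ t := fun k =>
      Finset.mem_image.2 ⟨k, Finset.mem_univ _, rfl⟩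
    have hgul : ∀ k : Fin N, g k.succ ∈ t := by
      intro k
      rw [himg]
      exact Finset.mem_image.2 ⟨k, Finset.mem_univ _, rfl⟩
    have hfmono' : StrictMono (fun k : Fin N => f k.succ) :=
      fun a b hab => hfmono _ _ (Fin.succ_lt_succ_iff.2 hab)
    have hgmono' : StrictMono (fun k : Fin N => g k.succ) :=
      fun a b hab => hgmono _ _ (Fin.succ_lt_succ_iff.2 hab)
    have hef := Finset.orderEmbOfFin_unique hcardf hful hfmono'
    have heg := Finset.orderEmbOfFin_unique hcardf hgul hgmono'
    funext k
    refine Fin.cases ?_ ?_ k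
    · exact h0
    · intro j
      have : (fun k : Fin N => f k.succ) j = (fun k : Fin N => g k.succ) j := by
        rw [hef, heg]
      exact this
  · -- surjective
    rintro ⟨m, t⟩ hmt
    rw [Finset.mem_sigma, Finset.mem_powersetCard] at hmt
    obtain ⟨hm, hsub, hcard⟩ := hmt
    rw [Finset.mem_Ioo] at hm
    set e := t.orderEmbOfFin hcard with he
    refine ⟨Fin.cases m (fun k => e k), ?_, ?_⟩
    · rw [Finset.mem_filter, Fintype.mem_piFinset]
      constructor
      · intro i
        refine Fin.cases ?_ ?_ i
        · exact Finset.mem_Ioo.2 hm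
        · intro k
          have hmem := Finset.mem_Ioo.1 (hsub (Finset.orderEmbOfFin_mem t hcard k))
          simp only [Fin.cases_succ]
          exact Finset.mem_Ioo.2 ⟨lt_trans hm.1 hmem.1, hmem.2⟩
      · intro i j
        refine Fin.cases ?_ ?_ j
        · intro h
          exact absurd h (Fin.not_lt_zero i)
        · intro l
          refine Fin.cases ?_ ?_ i
          · intro _
            simp only [Fin.cases_zero, Fin.cases_succ]
            exact (Finset.mem_Ioo.1 (hsub (Finset.orderEmbOfFin_mem t hcard l))).1
          · intro k hkl
            simp only [Fin.cases_succ]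
            exact (t.orderEmbOfFin hcard).strictMono (Fin.succ_lt_succ_iff.1 hkl)
    · have h0 : (Fin.cases m (fun k => e k) : Fin (N+1) → ℕ) 0 = m := rfl
      have himg : Finset.image (fun k : Fin N =>
          (Fin.cases m (fun k => e k) : Fin (N+1) → ℕ) k.succ) Finset.univ = t := by
        apply Finset.eq_of_subset_of_card_le
        · intro x hx
          obtain ⟨k, _, rfl⟩ := Finset.mem_image.1 hx
          simp only [Fin.cases_succ]
          exact Finset.orderEmbOfFin_mem t hcard k
        · rw [hcard, Finset.card_image_of_injective _ ?einj, Finset.card_univ,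
            Fintype.card_fin]
          case einj =>
            intro a b hab
            simp only [Fin.cases_succ] at hab
            exact e.injective hab
      rw [Sigma.mk.inj_iff]
      exact ⟨h0, heq_of_eq himg⟩

  · -- values agree
    intro f hf
    rw [Finset.mem_filter, Fintype.mem_piFinset] at hf
    obtain ⟨hmem, hmono⟩ := hf
    have hzero : (⟨0, Nat.succ_pos N⟩ : Fin (N + 1)) = 0 := rfl
    have hinj : Function.Injective (fun k : Fin N => f k.succ) := by
      intro a b hab
      by_contra hne
      rcases lt_or_gt_of_ne (fun hc : a = b => hne hc) with h | h
      · exact absurd hab (ne_of_lt (hmono _ _ (Fin.succ_lt_succ_iff.2 h)))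
      · exact absurd hab.symm (ne_of_lt (hmono _ _ (Fin.succ_lt_succ_iff.2 h)))
    have hprod : ∏ k : Fin (N+1), ((f k : ZMod p))⁻¹
        = (f 0 : ZMod p)⁻¹ * ∏ i ∈ Finset.image (fun k : Fin N => f k.succ) Finset.univ,
            ((i : ZMod p))⁻¹ := by
      rw [Finset.prod_image (fun a _ b _ hab => hinj hab), Fin.prod_univ_succ]
    rw [hzero, hprod]


/-- Let `n ≥ 1` and let `p > n + 1` be a prime. Then `F_n(1 - x) = (-1)^{n-1}·F_n(x)`
as polynomials over `ℤ/pℤ`. -/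
theorem zhaoSunF_comp_one_sub (n p : ℕ) (hn : 0 < n) (hp : p.Prime) (hnp : n + 1 < p) :
    (zhaoSunF n p hn).comp (1 - Polynomial.X) = (-1) ^ (n - 1) * zhaoSunF n p hn := by
  obtain ⟨N, rfl⟩ : ∃ N, n = N + 1 := ⟨n - 1, by omega⟩
  have h : zhaoSunF (N + 1) p hn = zsB p N := by
    have := zhaoSunF_eq_zsB N p
    convert this using 2
  rw [h, Nat.add_sub_cancel]
  exact zsSym p hp N (by omega)
end

section
/- Let n be a positive integer and let p > n + 1 be a prime. Then the sum in ℤ/pℤ of 1/(i_1 ⋯ i_n) over all n-tuples of integers 0 < i_1 < i_2 < ⋯ < i_n < p equals 0; that is, the n-th elementary symmetric function of the inverses of 1, 2, …, p-1 in ℤ/pℤ vanishes. -/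
open Polynomial Finset

/-- esymm of a multiset with `0` consed on is unchanged (for positive degree). -/
lemma esymm_cons_zero_s8 {R : Type*} [CommRing R] (m : Multiset R) {n : ℕ} (hn : 0 < n) :
    ((0 : R) ::ₘ m).esymm n = m.esymm n := by
  obtain ⟨k, rfl⟩ := Nat.exists_eq_add_of_lt hn
  simp only [Multiset.esymm, Multiset.powersetCard_cons, Multiset.map_add, Multiset.sum_add,
    Multiset.map_map, Function.comp_def, Multiset.prod_cons, zero_mul]
  simp

/-- The `n`-th elementary symmetric function of all elements of `ZMod p` vanishes
for `0 < n` and `n + 1 < p`. -/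
lemma esymm_univ_zmod (p n : ℕ) [hF : Fact p.Prime] (hn : 0 < n) (hnp : n + 1 < p) :
    ((Finset.univ : Finset (ZMod p)).val).esymm n = 0 := by
  have hp1 : 1 < p := hF.out.one_lt
  have hq : Fintype.card (ZMod p) = p := ZMod.card p
  have hdeg : (X ^ p - X : (ZMod p)[X]).natDegree = p :=
    FiniteField.X_pow_card_sub_X_natDegree_eq _ hp1
  have hroots : (X ^ p - X : (ZMod p)[X]).roots = (Finset.univ : Finset (ZMod p)).val := by
    have := FiniteField.roots_X_pow_card_sub_X (ZMod p)
    rwa [hq] at this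
  have hcard : Multiset.card (X ^ p - X : (ZMod p)[X]).roots
      = (X ^ p - X : (ZMod p)[X]).natDegree := by
    rw [hroots, hdeg]
    simp [hq]
  have hk : p - n ≤ (X ^ p - X : (ZMod p)[X]).natDegree := by omega
  have hdlt : (X : (ZMod p)[X]).degree < (X ^ p : (ZMod p)[X]).degree := by
    rw [Polynomial.degree_X, Polynomial.degree_X_pow]
    exact_mod_cast hp1
  have hlead : (X ^ p - X : (ZMod p)[X]).leadingCoeff = 1 := by
    rw [Polynomial.leadingCoeff_sub_of_degree_lt hdlt, Polynomial.leadingCoeff_X_pow]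
  have hco := Polynomial.coeff_eq_esymm_roots_of_card hcard hk
  rw [hdeg, hroots, hlead, one_mul] at hco
  have hpn : p - (p - n) = n := by omega
  rw [hpn] at hco
  have hcoeff : (X ^ p - X : (ZMod p)[X]).coeff (p - n) = 0 := by
    have h1 : p - n ≠ p := by omega
    have h2 : p - n ≠ 1 := by omega
    simp [Polynomial.coeff_sub, Polynomial.coeff_X_pow, Polynomial.coeff_X, h1, h2,
      Ne.symm h1, Ne.symm h2]
  rw [hcoeff] at hco
  have := hco.symm
  rcases mul_eq_zero.mp this with h | h
  · exact absurd h (by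
      have : ((-1 : ZMod p)) ^ n ≠ 0 := by
        apply pow_ne_zero; simp
      exact this)
  · exact h

/-- Let `n ≥ 1` and let `p > n + 1` be a prime. Then the sum in `ℤ/pℤ` of `1/(i₁⋯iₙ)`
over all strictly increasing `n`-tuples of integers `0 < i₁ < ⋯ < iₙ < p` is `0`;
i.e. the `n`-th elementary symmetric function of the inverses of `1, …, p-1` vanishes. -/
theorem esymm_inv_vanishes (n p : ℕ) (hn : 0 < n) (hp : p.Prime) (hnp : n + 1 < p) :
    ∑ f ∈ (Fintype.piFinset fun _ : Fin n => Finset.Ioo 0 p).filter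
        (fun f => ∀ i j : Fin n, i < j → f i < f j),
      ∏ k : Fin n, ((f k : ZMod p))⁻¹ = 0 := by
  haveI : Fact p.Prime := ⟨hp⟩
  set S : Finset ℕ := Finset.Ioo 0 p with hS
  set g : ℕ → ZMod p := fun i => (i : ZMod p)⁻¹ with hg
  -- cast injectivity on S
  have hcast : ∀ i ∈ S, ((i : ZMod p)) ≠ 0 := by
    intro i hi
    rw [hS, Finset.mem_Ioo] at hi
    rw [Ne, ZMod.natCast_eq_zero_iff]
    intro hdvd
    exact absurd (Nat.le_of_dvd hi.1 hdvd) (not_le.mpr hi.2)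
  have hinj : Set.InjOn g S := by
    intro a ha b hb hab
    have ha' := Finset.mem_Ioo.mp ha
    have hb' := Finset.mem_Ioo.mp hb
    have : (a : ZMod p) = (b : ZMod p) := by
      have := congrArg (fun x => x⁻¹) hab
      simpa [hg, inv_inv] using this
    calc a = ((a : ZMod p)).val := (ZMod.val_cast_of_lt ha'.2).symm
      _ = ((b : ZMod p)).val := by rw [this]
      _ = b := ZMod.val_cast_of_lt hb'.2
  -- Step 1: reindex the sum over strictly monotone tuples as a sum over n-subsets of S
  have step1 : ∑ f ∈ (Fintype.piFinset fun _ : Fin n => Finset.Ioo 0 p).filter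
        (fun f => ∀ i j : Fin n, i < j → f i < f j),
      ∏ k : Fin n, ((f k : ZMod p))⁻¹
      = ∑ t ∈ S.powersetCard n, ∏ i ∈ t, g i := by
    apply Finset.sum_bij (fun f _ => Finset.image f Finset.univ)
    · intro f hf
      rw [Finset.mem_filter, Fintype.mem_piFinset] at hf
      rw [Finset.mem_powersetCard]
      constructor
      · intro x hx
        rw [Finset.mem_image] at hx
        obtain ⟨k, _, rfl⟩ := hx
        exact hf.1 k
      · have hmono : StrictMono f := fun i j hij => hf.2 i j hij
        rw [Finset.card_image_of_injective _ hmono.injective, Finset.card_univ, Fintype.card_fin]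
    · intro f hf f' hf' heq
      rw [Finset.mem_filter, Fintype.mem_piFinset] at hf hf'
      have hmono : StrictMono f := fun i j hij => hf.2 i j hij
      have hmono' : StrictMono f' := fun i j hij => hf'.2 i j hij
      have hcard : (Finset.image f Finset.univ).card = n := by
        rw [Finset.card_image_of_injective _ hmono.injective, Finset.card_univ, Fintype.card_fin]
      have h1 : f = (Finset.image f Finset.univ).orderEmbOfFin hcard :=
        Finset.orderEmbOfFin_unique hcard (fun x => Finset.mem_image_of_mem f (Finset.mem_univ x))
          hmono
      have h2 : f' = (Finset.image f Finset.univ).orderEmbOfFin hcard := by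
        apply Finset.orderEmbOfFin_unique hcard _ hmono'
        intro x
        rw [heq]
        exact Finset.mem_image_of_mem f' (Finset.mem_univ x)
      funext x
      rw [h1, h2]
    · intro t ht
      rw [Finset.mem_powersetCard] at ht
      refine ⟨t.orderEmbOfFin ht.2, ?_, ?_⟩
      · rw [Finset.mem_filter, Fintype.mem_piFinset]
        refine ⟨fun k => ht.1 (t.orderEmbOfFin_mem ht.2 k), ?_⟩
        intro i j hij
        exact (t.orderEmbOfFin ht.2).strictMono hij
      · apply Finset.eq_of_subset_of_card_le
        · intro x hx
          rw [Finset.mem_image] at hx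
          obtain ⟨k, _, rfl⟩ := hx
          exact t.orderEmbOfFin_mem ht.2 k
        · rw [Finset.card_image_of_injective _ (t.orderEmbOfFin ht.2).injective,
            Finset.card_univ, Fintype.card_fin, ht.2]
    · intro f hf
      rw [Finset.mem_filter, Fintype.mem_piFinset] at hf
      have hmono : StrictMono f := fun i j hij => hf.2 i j hij
      rw [Finset.prod_image (fun a _ b _ h => hmono.injective h)]
  rw [step1, ← Finset.esymm_map_val g S n]
  -- Step 2: identify the multiset of inverses with the nonzero elements of ZMod p
  have himage : S.image g = (Finset.univ : Finset (ZMod p)).erase 0 := by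
    apply Finset.eq_of_subset_of_card_le
    · intro x hx
      rw [Finset.mem_image] at hx
      obtain ⟨i, hi, rfl⟩ := hx
      rw [Finset.mem_erase]
      exact ⟨inv_ne_zero (hcast i hi), Finset.mem_univ _⟩
    · rw [Finset.card_erase_of_mem (Finset.mem_univ _), Finset.card_univ, ZMod.card,
        Finset.card_image_of_injOn hinj, hS, Nat.card_Ioo]
      omega
  have hmulti : S.val.map g = ((Finset.univ : Finset (ZMod p)).erase 0).val := by
    rw [← Finset.image_val_of_injOn hinj, himage]
  rw [hmulti]
  have hcons : (Finset.univ : Finset (ZMod p)).val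
      = (0 : ZMod p) ::ₘ ((Finset.univ : Finset (ZMod p)).erase 0).val := by
    rw [Finset.erase_val]
    exact (Multiset.cons_erase (Finset.mem_univ (0 : ZMod p))).symm
  have := esymm_univ_zmod p n hn hnp
  rw [hcons, esymm_cons_zero_s8 _ hn] at this
  exact this
end

section
/- Let n ≥ 2 be an integer and let p > n + 1 be a prime. Let F_n(x) = Σ x^{i_1}/(i_1 ⋯ i_n) and F_{n-1}(x) = Σ x^{i_1}/(i_1 ⋯ i_{n-1}) be polynomials over ℤ/pℤ, the sums ranging over strictly increasing tuples of integers strictly between 0 and p, and let C = Σ 1/(i_2 ⋯ i_n) ∈ ℤ/pℤ, the sum over all (n-1)-tuples of integers 0 < i_2 < ⋯ < i_n < p. Then x(x - 1) · F_n'(x) = F_{n-1}(x) - x·C as polynomials over ℤ/pℤ, where F_n' denotes the formal derivative of F_n. -/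
open Polynomial

/-!
Differentiating `x^{i₁}/(i₁⋯iₙ)` cancels the unit `i₁` of `ℤ/pℤ`, and
`x(x-1)·x^{i₁-1} = x^{i₁+1} - x^{i₁}`. Grouping the tuples by their tail `(i₂, …, iₙ)`, the first
entry runs over `0 < i₁ < i₂`, so the sum over `i₁` telescopes to `x^{i₂} - x`; summing over the
tails gives `F_{n-1}(x) - x·C`.
-/

open Finset

def strictIncTuples (n p : ℕ) : Finset (Fin n → ℕ) :=
  (Fintype.piFinset fun _ : Fin n => Ioo 0 p).filter fun f => ∀ i j : Fin n, i < j → f i < f j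

theorem zhaoSunF_eq (n p : ℕ) (hn : 0 < n) :
    zhaoSunF n p hn = ∑ f ∈ strictIncTuples n p, C (∏ k, ((f k : ZMod p))⁻¹) * X ^ f ⟨0, hn⟩ :=
  rfl

theorem mem_strictIncTuples {n p : ℕ} {f : Fin n → ℕ} :
    f ∈ strictIncTuples n p ↔ (∀ k, f k ∈ Ioo 0 p) ∧ StrictMono f := by
  simp only [strictIncTuples, mem_filter, Fintype.mem_piFinset, StrictMono]

theorem cons_mem_strictIncTuples {m p a : ℕ} {g : Fin (m + 1) → ℕ} :
    Fin.cons a g ∈ strictIncTuples (m + 2) p ↔ a ∈ Ioo 0 (g 0) ∧ g ∈ strictIncTuples (m + 1) p := by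
  rw [mem_strictIncTuples, mem_strictIncTuples, Fin.forall_fin_succ, Fin.strictMono_cons]
  simp only [Fin.cons_zero, Fin.cons_succ, mem_Ioo]
  constructor
  · rintro ⟨⟨⟨ha, -⟩, hg⟩, hlt, hmono⟩
    exact ⟨⟨ha, hlt 0⟩, hg, hmono⟩
  · rintro ⟨⟨ha, hag⟩, hg, hmono⟩
    exact ⟨⟨⟨ha, hag.trans (hg 0).2⟩, hg⟩,
      fun j => hag.trans_le (hmono.monotone (Fin.zero_le j)), hmono⟩

theorem sum_strictIncTuples_succ {M : Type*} [AddCommMonoid M] (m p : ℕ)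
    (φ : (Fin (m + 2) → ℕ) → M) :
    ∑ f ∈ strictIncTuples (m + 2) p, φ f =
      ∑ g ∈ strictIncTuples (m + 1) p, ∑ a ∈ Ioo 0 (g 0), φ (Fin.cons a g) := by
  rw [sum_sigma']
  refine sum_nbij' (fun f => ⟨Fin.tail f, f 0⟩) (fun x => Fin.cons x.2 x.1) ?_ ?_ ?_ ?_ ?_
  · intro f hf
    rw [← Fin.cons_self_tail f, cons_mem_strictIncTuples] at hf
    simpa [and_comm] using hf
  · rintro ⟨g, a⟩ hx
    simpa [cons_mem_strictIncTuples, and_comm] using hx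
  · exact fun f _ => Fin.cons_self_tail f
  · rintro ⟨g, a⟩ -
    simp only [Fin.tail_cons, Fin.cons_zero]
  · exact fun f _ => by rw [Fin.cons_self_tail]

theorem sum_Ioo_pow_succ_sub_pow {R : Type*} [Ring R] (x : R) {b : ℕ} (hb : 0 < b) :
    ∑ a ∈ Ioo 0 b, (x ^ (a + 1) - x ^ a) = x ^ b - x := by
  rw [← Ico_add_one_left_eq_Ioo, zero_add, sum_Ico_sub (fun i => x ^ i) (m := 1) hb, pow_one]

theorem ZMod.natCast_ne_zero_of_mem_Ioo {p a : ℕ} (ha : a ∈ Ioo 0 p) : (a : ZMod p) ≠ 0 := by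
  rw [mem_Ioo] at ha
  rw [Ne, ZMod.natCast_eq_zero_iff]
  exact fun h => ha.1.ne' (Nat.eq_zero_of_dvd_of_lt h ha.2)

theorem X_mul_X_sub_one_mul_derivative_C_mul_X_pow {K : Type*} [Field K] {a : ℕ}
    (ha : (a : K) ≠ 0) (c : K) :
    X * (X - 1) * derivative (C ((a : K)⁻¹ * c) * X ^ a) = C c * (X ^ (a + 1) - X ^ a) := by
  obtain ⟨b, rfl⟩ : ∃ b, a = b + 1 := Nat.exists_eq_succ_of_ne_zero (by rintro rfl; simp at ha)
  rw [derivative_C_mul_X_pow, mul_comm _ ((b + 1 : ℕ) : K), mul_inv_cancel_left₀ ha,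
    Nat.add_sub_cancel]
  ring

theorem X_mul_X_sub_one_mul_derivative_zhaoSunF (m p : ℕ) [Fact p.Prime] :
    X * (X - 1) * derivative (zhaoSunF (m + 2) p (by omega)) =
      zhaoSunF (m + 1) p (by omega) -
        X * C (∑ g ∈ strictIncTuples (m + 1) p, ∏ k, ((g k : ZMod p))⁻¹) := by
  have fiber : ∀ g ∈ strictIncTuples (m + 1) p,
      ∑ a ∈ Ioo 0 (g 0), X * (X - 1) *
        derivative (C (∏ k, (((Fin.cons a g : Fin (m + 2) → ℕ) k : ℕ) : ZMod p)⁻¹) * X ^ a) =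
      C (∏ k, ((g k : ZMod p))⁻¹) * X ^ g 0 - X * C (∏ k, ((g k : ZMod p))⁻¹) := by
    intro g hg
    obtain ⟨hg0, hgp⟩ := mem_Ioo.1 ((mem_strictIncTuples.1 hg).1 0)
    simp only [Fin.prod_univ_succ, Fin.cons_zero, Fin.cons_succ]
    rw [sum_congr rfl fun a ha => X_mul_X_sub_one_mul_derivative_C_mul_X_pow
      (ZMod.natCast_ne_zero_of_mem_Ioo (Ioo_subset_Ioo_right hgp.le ha)) _,
      ← mul_sum, sum_Ioo_pow_succ_sub_pow _ hg0]
    ring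
  rw [zhaoSunF_eq, zhaoSunF_eq, derivative_sum, mul_sum, sum_strictIncTuples_succ]
  exact (sum_congr rfl fiber).trans (by rw [sum_sub_distrib, map_sum, mul_sum]; rfl)

/-- Let `n ≥ 2` and let `p > n + 1` be a prime. With
`C = ∑ 1/(i₂⋯iₙ)` over all `(n-1)`-tuples `0 < i₂ < ⋯ < iₙ < p`, we have
`x(x-1)·Fₙ'(x) = F_{n-1}(x) - x·C` as polynomials over `ℤ/pℤ`. -/
theorem zhaoSunF_derivative (n p : ℕ) (hn : 2 ≤ n) (hp : p.Prime) :
    Polynomial.X * (Polynomial.X - 1) *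
        Polynomial.derivative (zhaoSunF n p (by omega)) =
      zhaoSunF (n - 1) p (by omega) -
        Polynomial.X * Polynomial.C
          (∑ f ∈ (Fintype.piFinset fun _ : Fin (n - 1) => Finset.Ioo 0 p).filter
              (fun f => ∀ i j : Fin (n - 1), i < j → f i < f j),
            ∏ k : Fin (n - 1), ((f k : ZMod p))⁻¹) := by
  obtain ⟨m, rfl⟩ : ∃ m, n = m + 2 := ⟨n - 2, by omega⟩
  have := Fact.mk hp
  exact X_mul_X_sub_one_mul_derivative_zhaoSunF m p
end

section
/- Let n be a positive even integer and let p > n + 1 be a prime. For r ∈ {0, 1, 2, 3, 4, 5} let S_r denote the sum in ℤ/pℤ of 1/(i_1 ⋯ i_n) over all n-tuples of integers 0 < i_1 < i_2 < ⋯ < i_n < p with i_1 ≡ r (mod 6). Then S_0 - S_3 = 2·(S_2 + S_3 + S_4) in ℤ/pℤ. -/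
/-!
Let `G(x) = ∑ x^{i₁}/(i₁⋯iₙ)`, summed over `0 < i₁ < ⋯ < iₙ < p`: a polynomial over `𝔽_p` of
degree `< p`. For even `n` it satisfies the functional equation `G(x) + G(1 - x) = G(1)`.
Evaluate it at a root `ζ` of `x² - x + 1`, a primitive sixth root of unity with `1 - ζ = ζ⁻¹`,
and group the terms by `i₁ mod 6`: since `ζ^i + ζ^{-i}` runs through `2, 1, -1, -2, -1, 1`, the
functional equation becomes `S₀ - 2S₂ - 3S₃ - 2S₄ = 0`.

The functional equation comes from differentiation. Let `Q_k(m)` be the sum of `1/(i₁⋯i_k)` over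
`m < i₁ < ⋯ < i_k < p`, `G_{k+1}` the polynomial `G` for `(k+1)`-tuples, and
`T_k(x) = (x - 1) ∑_{0<j<p} Q_k(j) x^j`. Splitting off the first entry gives
`x(x - 1) G_{k+1}' = T_k` and `T_{k+1} = G_{k+1} - G_{k+1}(1) x`. As `x(x - 1)` is invariant
under `x ↦ 1 - x` and a polynomial of degree `< p` is determined by its derivative and two of its
values, induction from `T_0 = x^p - x` gives `T_k(1 - x) = (-1)^{k+1} T_k(x)`.
-/

/-- `S_r` is the sum in `ℤ/pℤ` of `1/(i₁⋯iₙ)` over all strictly increasing `n`-tuples of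
integers `0 < i₁ < ⋯ < iₙ < p` with `i₁ ≡ r (mod 6)`. -/
noncomputable def zhaoSunS (n p : ℕ) (hn : 0 < n) (r : ℕ) : ZMod p :=
  ∑ f ∈ (Fintype.piFinset fun _ : Fin n => Finset.Ioo 0 p).filter
      (fun f => (∀ i j : Fin n, i < j → f i < f j) ∧ f ⟨0, hn⟩ % 6 = r),
    ∏ k : Fin n, ((f k : ZMod p))⁻¹

open Polynomial Finset

namespace Polynomial

variable {K : Type*} [Field K] {p : ℕ} [CharP K p]

theorem eq_zero_of_derivative_eq_C {D : K[X]} {c : K} (hdeg : D.natDegree < p)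
    (hD : derivative D = C c) (h0 : D.eval 0 = 0) (h1 : D.eval 1 = 0) : D = 0 := by
  have hle : D.natDegree ≤ 1 := by
    rw [natDegree_le_iff_coeff_eq_zero]
    intro N hN
    obtain ⟨m, rfl⟩ : ∃ m, N = m + 2 := ⟨N - 2, by omega⟩
    by_cases hm : m + 2 < p
    · have hcoeff := congrArg (coeff · (m + 1)) hD
      simp only [coeff_derivative, coeff_C, Nat.add_one_ne_zero, if_false] at hcoeff
      have hne : ((m + 2 : ℕ) : K) ≠ 0 := by
        rw [Ne, CharP.cast_eq_zero_iff K p]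
        exact Nat.not_dvd_of_pos_of_lt (by omega) hm
      push_cast at hcoeff hne
      exact (mul_eq_zero.mp (by linear_combination hcoeff)).resolve_right hne
    · exact coeff_eq_zero_of_natDegree_lt (by omega)
  rw [eq_X_add_C_of_natDegree_le_one hle] at h0 h1 ⊢
  simp only [eval_add, eval_mul, eval_C, eval_X, mul_zero, zero_add, mul_one] at h0 h1
  rw [h0, add_zero] at h1
  simp [h0, h1]

theorem comp_one_sub_eq_of_X_mul_X_sub_one_mul_derivative [Fact p.Prime] {F A : K[X]} {ε : K}
    (hdeg : F.natDegree < p) (h0 : F.eval 0 = 0) (hFA : X * (X - 1) * derivative F = A)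
    (hA : A.comp (1 - X) = C ε * A) :
    (F - C (F.eval 1) * X).comp (1 - X) = -C ε * (F - C (F.eval 1) * X) := by
  set a := F.eval 1
  set D := (F - C a * X).comp (1 - X) + C ε * (F - C a * X)
  have hXX : (X * (X - 1) : K[X]).comp (1 - X) = X * (X - 1) := by
    simp only [mul_comp, X_comp, sub_comp, one_comp]
    ring
  have hD : X * (X - 1) * derivative D = X * (X - 1) * C (a * (1 - ε)) := by
    have hFA' := congrArg (comp · (1 - X)) hFA
    simp only [mul_comp, hXX, hA] at hFA'
    simp only [D, derivative_add, derivative_comp, derivative_sub, derivative_mul, derivative_C,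
      derivative_X, derivative_one, sub_comp, mul_comp, C_comp, X_comp, C_mul, C_sub, C_1]
    linear_combination (-1 : K[X]) * hFA' + C ε * hFA
  have hXX0 : (X * (X - 1) : K[X]) ≠ 0 := mul_ne_zero X_ne_zero (X_sub_C_ne_zero 1)
  have hdegD : D.natDegree < p := by
    have hB : (F - C a * X).natDegree < p := (natDegree_sub_le _ _).trans_lt
      (max_lt hdeg (((natDegree_C_mul_le a X).trans natDegree_X_le).trans_lt
        (Fact.out : p.Prime).one_lt))
    have hσ : (1 - X : K[X]).natDegree = 1 := by compute_degree!
    refine (natDegree_add_le _ _).trans_lt (max_lt ?_ ((natDegree_C_mul_le _ _).trans_lt hB))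
    rwa [natDegree_comp, hσ, mul_one]
  have hD0 : D = 0 := by
    refine eq_zero_of_derivative_eq_C hdegD (mul_left_cancel₀ hXX0 hD) ?_ ?_ <;>
      simp [D, eval_comp, h0, a]
  linear_combination hD0

end Polynomial

namespace ZhaoSun

variable (p : ℕ)

def increasingTuples (k m : ℕ) : Finset (Fin k → ℕ) :=
  (Fintype.piFinset fun _ => Ioo m p).filter StrictMono

variable {p}

@[simp]
theorem mem_increasingTuples {k m : ℕ} {f : Fin k → ℕ} :
    f ∈ increasingTuples p k m ↔ (∀ i, m < f i ∧ f i < p) ∧ StrictMono f := by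
  simp [increasingTuples]

theorem cons_mem_increasingTuples {k m j : ℕ} {g : Fin k → ℕ} :
    Fin.cons j g ∈ increasingTuples p (k + 1) m ↔ j ∈ Ioo m p ∧ g ∈ increasingTuples p k j := by
  simp only [mem_increasingTuples, Fin.forall_fin_succ, Fin.cons_zero, Fin.cons_succ,
    Fin.strictMono_cons, mem_Ioo]
  constructor
  · rintro ⟨⟨hj, hg⟩, hjg, hmono⟩
    exact ⟨hj, fun i => ⟨hjg i, (hg i).2⟩, hmono⟩
  · rintro ⟨hj, hg, hmono⟩
    exact ⟨⟨hj, fun i => ⟨hj.1.trans (hg i).1, (hg i).2⟩⟩, fun i => (hg i).1, hmono⟩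

theorem sum_increasingTuples_succ {M : Type*} [AddCommMonoid M] (k m : ℕ)
    (F : (Fin (k + 1) → ℕ) → M) :
    ∑ f ∈ increasingTuples p (k + 1) m, F f =
      ∑ j ∈ Ioo m p, ∑ g ∈ increasingTuples p k j, F (Fin.cons j g) := by
  rw [sum_sigma']
  refine sum_nbij' (fun f => ⟨f 0, Fin.tail f⟩) (fun x => Fin.cons x.1 x.2) ?_ ?_ ?_ ?_ ?_
  · intro f hf
    rw [← Fin.cons_self_tail f, cons_mem_increasingTuples] at hf
    simpa using hf
  · rintro ⟨j, g⟩ hx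
    exact cons_mem_increasingTuples.mpr (by simpa using hx)
  · intro f _
    exact Fin.cons_self_tail f
  · rintro ⟨j, g⟩ _
    simp
  · intro f _
    simp

variable (p)

def harmonicTail (k m : ℕ) : ZMod p :=
  ∑ f ∈ increasingTuples p k m, ∏ i, ((f i : ℕ) : ZMod p)⁻¹

noncomputable def harmonicPoly (k : ℕ) : (ZMod p)[X] :=
  ∑ f ∈ increasingTuples p (k + 1) 0, C (∏ i, ((f i : ℕ) : ZMod p)⁻¹) * X ^ f 0

noncomputable def harmonicTailPoly (k : ℕ) : (ZMod p)[X] :=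
  (X - 1) * ∑ j ∈ Ioo 0 p, C (harmonicTail p k j) * X ^ j

theorem harmonicTail_zero (m : ℕ) : harmonicTail p 0 m = 1 := by
  simp [harmonicTail, increasingTuples, Subsingleton.strictMono]

theorem harmonicTail_succ (k m : ℕ) :
    harmonicTail p (k + 1) m = ∑ j ∈ Ioo m p, ((j : ℕ) : ZMod p)⁻¹ * harmonicTail p k j := by
  simp only [harmonicTail, sum_increasingTuples_succ, Fin.prod_univ_succ, Fin.cons_zero,
    Fin.cons_succ, mul_sum]

theorem harmonicPoly_eq_sum (k : ℕ) :
    harmonicPoly p k = ∑ j ∈ Ioo 0 p, C (((j : ℕ) : ZMod p)⁻¹ * harmonicTail p k j) * X ^ j := by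
  simp only [harmonicPoly, harmonicTail, sum_increasingTuples_succ, Fin.prod_univ_succ,
    Fin.cons_zero, Fin.cons_succ, mul_sum, map_sum, sum_mul]

variable {p}

theorem X_mul_X_sub_one_mul_derivative_harmonicPoly [Fact p.Prime] (k : ℕ) :
    X * (X - 1) * derivative (harmonicPoly p k) = harmonicTailPoly p k := by
  have euler :
      X * derivative (harmonicPoly p k) = ∑ j ∈ Ioo 0 p, C (harmonicTail p k j) * X ^ j := by
    rw [harmonicPoly_eq_sum, derivative_sum, mul_sum]
    refine sum_congr rfl fun j hj => ?_
    rw [mem_Ioo] at hj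
    have hj0 : ((j : ℕ) : ZMod p) ≠ 0 := by
      rw [Ne, ZMod.natCast_eq_zero_iff]
      exact Nat.not_dvd_of_pos_of_lt hj.1 hj.2
    rw [derivative_C_mul_X_pow, mul_left_comm, ← pow_succ', Nat.sub_add_cancel hj.1,
      mul_right_comm, inv_mul_cancel₀ hj0, one_mul]
  rw [harmonicTailPoly, ← euler]
  ring

theorem harmonicTailPoly_zero [NeZero p] : harmonicTailPoly p 0 = X ^ p - X := by
  simp only [harmonicTailPoly, harmonicTail_zero, map_one, one_mul]
  rw [← Ico_add_one_left_eq_Ioo, zero_add, mul_comm, geom_sum_Ico_mul _ NeZero.one_le, pow_one]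

theorem harmonicTailPoly_succ (k : ℕ) :
    harmonicTailPoly p (k + 1) = harmonicPoly p k - C ((harmonicPoly p k).eval 1) * X := by
  have swap : ∑ j ∈ Ioo 0 p, C (harmonicTail p (k + 1) j) * X ^ j =
      ∑ i ∈ Ioo 0 p, C (((i : ℕ) : ZMod p)⁻¹ * harmonicTail p k i) * ∑ j ∈ Ico 1 i, X ^ j := by
    simp only [harmonicTail_succ, map_sum, sum_mul, mul_sum]
    exact sum_comm' fun j i => by simp only [mem_Ioo, mem_Ico]; omega
  rw [harmonicTailPoly, swap, harmonicPoly_eq_sum, eval_finsetSum, map_sum, sum_mul, mul_sum,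
    ← sum_sub_distrib]
  refine sum_congr rfl fun i hi => ?_
  rw [mul_left_comm, mul_comm (X - 1), geom_sum_Ico_mul _ (mem_Ioo.mp hi).1]
  simp only [eval_mul, eval_C, eval_pow, eval_X, one_pow, mul_one, pow_one]
  ring

theorem natDegree_harmonicPoly_lt [NeZero p] (k : ℕ) : (harmonicPoly p k).natDegree < p := by
  rw [harmonicPoly_eq_sum]
  refine (natDegree_sum_le_of_forall_le _ _ fun j hj => ?_).trans_lt
    (Nat.sub_one_lt (NeZero.ne p))
  exact (natDegree_C_mul_X_pow_le _ _).trans (Nat.le_sub_one_of_lt (mem_Ioo.mp hj).2)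

theorem harmonicPoly_eval_zero (k : ℕ) : (harmonicPoly p k).eval 0 = 0 := by
  rw [harmonicPoly_eq_sum, eval_finsetSum]
  refine sum_eq_zero fun j hj => ?_
  simp [(mem_Ioo.mp hj).1.ne']

theorem sum_increasingTuples_eq_sum_zhaoSunS {R : Type*} [CommRing R] [Algebra (ZMod p) R]
    (k : ℕ) (hn : 0 < k + 1) (ψ : ℕ → R) :
    ∑ f ∈ increasingTuples p (k + 1) 0,
        ψ (f 0 % 6) * algebraMap (ZMod p) R (∏ i, ((f i : ℕ) : ZMod p)⁻¹) =
      ∑ r ∈ range 6, ψ r * algebraMap (ZMod p) R (zhaoSunS (k + 1) p hn r) := by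
  rw [← sum_fiberwise_of_maps_to (g := fun f => f 0 % 6) (t := range 6)
    fun f _ => mem_range.mpr (Nat.mod_lt _ (by norm_num))]
  refine sum_congr rfl fun r _ => ?_
  rw [zhaoSunS, map_sum, mul_sum, increasingTuples, filter_filter]
  refine sum_congr (filter_congr fun f _ => ?_) fun f hf => ?_
  · simp [StrictMono]
  · have hr := (mem_filter.mp hf).2.2
    rw [Fin.zero_eta] at hr
    rw [hr]

theorem pow_six_eq_one_of_sq_sub_add_one {R : Type*} [CommRing R] {x : R}
    (hx : x ^ 2 - x + 1 = 0) : x ^ 6 = 1 := by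
  linear_combination (x ^ 4 + x ^ 3 - x - 1) * hx

theorem aeval_harmonicPoly {R : Type*} [CommRing R] [Algebra (ZMod p) R] (k : ℕ)
    (hn : 0 < k + 1) {x : R} (hx : x ^ 6 = 1) :
    aeval x (harmonicPoly p k) =
      ∑ r ∈ range 6, x ^ r * algebraMap (ZMod p) R (zhaoSunS (k + 1) p hn r) := by
  rw [← sum_increasingTuples_eq_sum_zhaoSunS, harmonicPoly, map_sum]
  refine sum_congr rfl fun f _ => ?_
  rw [map_mul, aeval_C, aeval_X_pow, mul_comm, ← pow_eq_pow_mod _ hx]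

theorem algebraMap_eval_one_harmonicPoly {R : Type*} [CommRing R] [Algebra (ZMod p) R] (k : ℕ)
    (hn : 0 < k + 1) :
    algebraMap (ZMod p) R ((harmonicPoly p k).eval 1) =
      ∑ r ∈ range 6, algebraMap (ZMod p) R (zhaoSunS (k + 1) p hn r) := by
  simpa [aeval_def, eval₂_at_one] using aeval_harmonicPoly (p := p) (R := R) k hn (one_pow 6)

variable [Fact p.Prime]

theorem harmonicTailPoly_comp_one_sub (k : ℕ) :
    (harmonicTailPoly p k).comp (1 - X) = C ((-1) ^ (k + 1)) * harmonicTailPoly p k := by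
  induction k with
  | zero =>
    rw [harmonicTailPoly_zero, sub_comp, X_pow_comp, X_comp, sub_pow_char]
    simp
  | succ k ih =>
    rw [harmonicTailPoly_succ, comp_one_sub_eq_of_X_mul_X_sub_one_mul_derivative (K := ZMod p)
      (natDegree_harmonicPoly_lt k) (harmonicPoly_eval_zero k)
      (X_mul_X_sub_one_mul_derivative_harmonicPoly k) ih, pow_succ _ (k + 1), C_mul]
    simp

theorem harmonicPoly_add_comp_one_sub {k : ℕ} (hk : Odd k) :
    harmonicPoly p k + (harmonicPoly p k).comp (1 - X) = C ((harmonicPoly p k).eval 1) := by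
  have h := harmonicTailPoly_comp_one_sub (p := p) (k + 1)
  rw [harmonicTailPoly_succ, add_assoc, one_add_one_eq_two,
    (hk.add_even even_two).neg_one_pow] at h
  simp only [sub_comp, mul_comp, C_comp, X_comp, map_neg, map_one] at h
  linear_combination h

theorem algebraMap_zhaoSunS_relation {R : Type*} [CommRing R] [Algebra (ZMod p) R] {ζ : R}
    (hζ : ζ ^ 2 - ζ + 1 = 0) {k : ℕ} (hk : Odd k) (hn : 0 < k + 1) :
    algebraMap (ZMod p) R (zhaoSunS (k + 1) p hn 0 - zhaoSunS (k + 1) p hn 3 -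
      2 * (zhaoSunS (k + 1) p hn 2 + zhaoSunS (k + 1) p hn 3 + zhaoSunS (k + 1) p hn 4)) = 0 := by
  have h := congrArg (aeval ζ) (harmonicPoly_add_comp_one_sub (p := p) hk)
  rw [map_add, aeval_comp, aeval_C, map_sub, aeval_one, aeval_X,
    aeval_harmonicPoly k hn (pow_six_eq_one_of_sq_sub_add_one hζ),
    aeval_harmonicPoly k hn (pow_six_eq_one_of_sq_sub_add_one (by linear_combination hζ)),
    algebraMap_eval_one_harmonicPoly k hn] at h
  simp only [sum_range_succ, sum_range_zero] at h
  simp only [map_sub, map_mul, map_add, map_ofNat]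
  -- the coefficients of `hζ` are the quotients of `ζ^r + (1 - ζ)^r - c_r` by `ζ² - ζ + 1`,
  -- where `c_r = 2, 1, -1, -2, -1, 1`
  linear_combination h - (2 * algebraMap (ZMod p) R (zhaoSunS (k + 1) p hn 2)
    + 3 * algebraMap (ZMod p) R (zhaoSunS (k + 1) p hn 3)
    + 2 * (ζ ^ 2 - ζ + 1) * algebraMap (ZMod p) R (zhaoSunS (k + 1) p hn 4)
    + 5 * ζ * (ζ - 1) * algebraMap (ZMod p) R (zhaoSunS (k + 1) p hn 5)) * hζ

end ZhaoSun

theorem zhaoSunS_relation'_general (n p : ℕ) (hn : 0 < n) (heven : Even n)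
    (hp : p.Prime) :
    zhaoSunS n p hn 0 - zhaoSunS n p hn 3 =
      2 * (zhaoSunS n p hn 2 + zhaoSunS n p hn 3 + zhaoSunS n p hn 4) := by
  have := Fact.mk hp
  obtain ⟨k, rfl⟩ : ∃ k, n = k + 1 := ⟨n - 1, by omega⟩
  have hk : Odd k := Nat.not_even_iff_odd.mp (Nat.even_add_one.mp heven)
  have hq : (X ^ 2 - X + 1 : (ZMod p)[X]).degree ≠ 0 := by
    rw [show (X ^ 2 - X + 1 : (ZMod p)[X]).degree = 2 by compute_degree!]
    norm_num
  rw [← sub_eq_zero]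
  refine AdjoinRoot.of.injective_of_degree_ne_zero hq ?_
  rw [map_zero, ← AdjoinRoot.algebraMap_eq]
  refine ZhaoSun.algebraMap_zhaoSunS_relation (ζ := AdjoinRoot.root _) ?_ hk hn
  have h := AdjoinRoot.eval₂_root (X ^ 2 - X + 1 : (ZMod p)[X])
  rwa [eval₂_add, eval₂_sub, eval₂_X_pow, eval₂_X, eval₂_one] at h

/-- Let `n` be a positive even integer and `p > n + 1` a prime. Then
`S₀ - S₃ = 2·(S₂ + S₃ + S₄)` in `ℤ/pℤ`. -/
theorem zhaoSunS_relation' (n p : ℕ) (hn : 0 < n) (heven : Even n)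
    (hp : p.Prime) (hnp : n + 1 < p) :
    zhaoSunS n p hn 0 - zhaoSunS n p hn 3 =
      2 * (zhaoSunS n p hn 2 + zhaoSunS n p hn 3 + zhaoSunS n p hn 4) :=
  zhaoSunS_relation'_general n p hn heven hp
end
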